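/- arXiv:1306.0794 — 3 statements merged into one kernel-verified Lean document; each statement's English description precedes it below -/
import Mathlib

section
/- Suppose g_n and g_{n+1} = (x − β_{n+1}) − γ_{n+1}/g_n both satisfy Riccati difference equations A_n D g_n = B_n (E1 g_n)(E2 g_n) + C_n M g_n + D_n and similarly with index n+1. Then, pointwise, the coefficients Â_{n+1} = A_n − (Δ_y²/2) D_n/γ_{n+1}, B̂_{n+1} = D_n/γ_{n+1}, Ĉ_{n+1} = −C_n − 2 M(x − β_{n+1}) D_n/γ_{n+1}, D̂_{n+1} = A_n + γ_{n+1} B_n + M(x − β_{n+1}) C_n + E1(x − β_{n+1}) E2(x − β_{n+1}) D_n/γ_{n+1} satisfy Â_{n+1} D g_{n+1} = B̂_{n+1} (E1 g_{n+1})(E2 g_{n+1}) + Ĉ_{n+1} M g_{n+1} + D̂_{n+1}. -/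
/-- Divided difference operator on the lattice. -/
noncomputable def Dop (y1 y2 f : ℝ → ℝ) (x : ℝ) : ℝ := (f (y2 x) - f (y1 x)) / (y2 x - y1 x)

/-- Averaging (companion) operator on the lattice. -/
noncomputable def Mop (y1 y2 f : ℝ → ℝ) (x : ℝ) : ℝ := (f (y1 x) + f (y2 x)) / 2

/-!
Substituting `gₙ₊₁ = (x − β) − γ/gₙ` expresses `D gₙ₊₁`, `M gₙ₊₁` and `E₁gₙ₊₁ · E₂gₙ₊₁` through
`D gₙ`, `M gₙ` and `P = E₁gₙ · E₂gₙ`. After that, the difference of the two sides of the new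
equation is `γ/P` times that of the Riccati equation of `gₙ`; the `Δ²/2` in `Â` absorbs
`M(x − β)² − E₁(x − β) E₂(x − β) = Δ²/4`.
-/

section

variable (y1 y2 g : ℝ → ℝ) (β γ x : ℝ)

theorem Dop_sub_div (hy : y1 x ≠ y2 x) (h1 : g (y1 x) ≠ 0) (h2 : g (y2 x) ≠ 0) :
    Dop y1 y2 (fun t => t - β - γ / g t) x
      = 1 + γ * Dop y1 y2 g x / (g (y1 x) * g (y2 x)) := by
  have hΔ : y2 x - y1 x ≠ 0 := sub_ne_zero.mpr hy.symm
  unfold Dop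
  field_simp
  ring

theorem Mop_sub_div (h1 : g (y1 x) ≠ 0) (h2 : g (y2 x) ≠ 0) :
    Mop y1 y2 (fun t => t - β - γ / g t) x
      = Mop y1 y2 (fun t => t - β) x - γ * Mop y1 y2 g x / (g (y1 x) * g (y2 x)) := by
  unfold Mop
  field_simp
  ring

theorem sub_div_mul_sub_div (hy : y1 x ≠ y2 x) (h1 : g (y1 x) ≠ 0) (h2 : g (y2 x) ≠ 0) :
    (y1 x - β - γ / g (y1 x)) * (y2 x - β - γ / g (y2 x))
      = (y1 x - β) * (y2 x - β)
        - γ * (2 * Mop y1 y2 (fun t => t - β) x * Mop y1 y2 g x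
          + (y2 x - y1 x) ^ 2 / 2 * Dop y1 y2 g x - γ) / (g (y1 x) * g (y2 x)) := by
  have hΔ : y2 x - y1 x ≠ 0 := sub_ne_zero.mpr hy.symm
  unfold Dop Mop
  field_simp
  ring

end

/-- Magnus' coefficient transfer. If `gₙ` satisfies a Riccati
difference equation with coefficients `Aₙ, Bₙ, Cₙ, Dₙ` and
`g_{n+1}(t) = (t − β_{n+1}) − γ_{n+1}/gₙ(t)`, then `g_{n+1}` satisfies the Riccati
equation with the hatted coefficients
`Â = Aₙ − (Δ²/2) Dₙ/γ`, `B̂ = Dₙ/γ`, `Ĉ = −Cₙ − 2 M(x−β) Dₙ/γ`,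
`D̂ = Aₙ + γ Bₙ + M(x−β) Cₙ + E1(x−β) E2(x−β) Dₙ/γ`. -/
theorem stmt14 (y1 y2 gn gn1 : ℝ → ℝ) (β γ An Bn Cn Dn : ℝ) (x : ℝ)
    (hy : y1 x ≠ y2 x)
    (h1 : gn (y1 x) ≠ 0) (h2 : gn (y2 x) ≠ 0) (hγ : γ ≠ 0)
    (hrel : ∀ t, gn1 t = (t - β) - γ / gn t)
    (hric : An * Dop y1 y2 gn x
      = Bn * (gn (y1 x) * gn (y2 x)) + Cn * Mop y1 y2 gn x + Dn) :
    (An - (y2 x - y1 x) ^ 2 / 2 * (Dn / γ)) * Dop y1 y2 gn1 x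
      = (Dn / γ) * (gn1 (y1 x) * gn1 (y2 x))
        + (-Cn - 2 * Mop y1 y2 (fun t => t - β) x * (Dn / γ)) * Mop y1 y2 gn1 x
        + (An + γ * Bn + Mop y1 y2 (fun t => t - β) x * Cn
            + (y1 x - β) * (y2 x - β) * (Dn / γ)) := by
  obtain rfl : gn1 = fun t => t - β - γ / gn t := funext hrel
  rw [Dop_sub_div y1 y2 gn β γ x hy h1 h2, Mop_sub_div y1 y2 gn β γ x h1 h2,
    sub_div_mul_sub_div y1 y2 gn β γ x hy h1 h2]
  linear_combination (norm := (unfold Mop; field_simp; ring)) γ / (gn (y1 x) * gn (y2 x)) * hric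
end

section
/- Let S be a formal Stieltjes series satisfying the Riccati equation A·DS = B·(E1 S)(E2 S) + C·MS + D with polynomials A, B, C, D, and let {P_n}, {P_n^{(1)}}, {q_n} be the corresponding orthogonal polynomials, first-kind associated polynomials, and second-kind functions (q_n = P_n S − P_{n−1}^{(1)}). If P_n and P^{(1)}_{n−1} satisfy the first-order difference system A·D P_n = (l_{n−1} + Δ_y π_{n−1}) E1 P_n − (C/2) E2 P_n − B E2 P^{(1)}_{n−1} + Θ_{n−1} E1 P_{n−1} and A·D P^{(1)}_{n−1} = (l_{n−1} + Δ_y π_{n−1}) E1 P^{(1)}_{n−1} + (C/2) E2 P^{(1)}_{n−1} + D E2 P_n + Θ_{n−1} E1 P^{(1)}_{n−2}, then q_n satisfies A·D q_n = (l_{n−1} + Δ_y π_{n−1}) E1 q_n + (B E1 S + C/2) E2 q_n + Θ_{n−1} E1 q_{n−1} for n ≥ 1. -/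
/-- (a) & (b) ⇒ (c) in the characterization theorem.
Indexing: `P (n+1) = P_n` (`P 0 = P_{-1} = 0` unused), `Q (n+1) = P^{(1)}_n`
(`Q 0 = P^{(1)}_{-1} = 0`), `q (n+1) = q_n`; the coefficient sequences are
`l n = l_n`, `π n = π_n`, `Θ n = Θ_n`, so the relation for `P_{n+1}` uses index `n`.
If `S` satisfies the Riccati equation, `q_{n} = P_{n} S − P^{(1)}_{n-1}`, and the
first-order difference system for `P_n` and `P^{(1)}_{n-1}` holds, then the second
kind functions satisfy
`A·D q_n = (l_{n-1} + Δ_y π_{n-1}) E1 q_n + (B E1S + C/2) E2 q_n + Θ_{n-1} E1 q_{n-1}`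
for all `n ≥ 1`. -/
theorem stmt15 (y1 y2 : ℝ → ℝ) (hy : ∀ x, y1 x ≠ y2 x)
    (A B Cp Dp : Polynomial ℝ) (l π Θ : ℕ → Polynomial ℝ)
    (S : ℝ → ℝ) (P Q q : ℕ → ℝ → ℝ)
    (hq : ∀ (n : ℕ) (t : ℝ), q (n + 1) t = P (n + 1) t * S t - Q (n + 1) t)
    (hS : ∀ x, A.eval x * Dop y1 y2 S x
      = B.eval x * (S (y1 x) * S (y2 x)) + Cp.eval x * Mop y1 y2 S x + Dp.eval x)
    (hP : ∀ (n : ℕ) (x : ℝ), A.eval x * Dop y1 y2 (P (n + 2)) x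
      = ((l n).eval x + (y2 x - y1 x) * (π n).eval x) * P (n + 2) (y1 x)
        - Cp.eval x / 2 * P (n + 2) (y2 x)
        - B.eval x * Q (n + 2) (y2 x)
        + (Θ n).eval x * P (n + 1) (y1 x))
    (hQ : ∀ (n : ℕ) (x : ℝ), A.eval x * Dop y1 y2 (Q (n + 2)) x
      = ((l n).eval x + (y2 x - y1 x) * (π n).eval x) * Q (n + 2) (y1 x)
        + Cp.eval x / 2 * Q (n + 2) (y2 x)
        + Dp.eval x * P (n + 2) (y2 x)
        + (Θ n).eval x * Q (n + 1) (y1 x)) :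
    ∀ (n : ℕ) (x : ℝ), A.eval x * Dop y1 y2 (q (n + 2)) x
      = ((l n).eval x + (y2 x - y1 x) * (π n).eval x) * q (n + 2) (y1 x)
        + (B.eval x * S (y1 x) + Cp.eval x / 2) * q (n + 2) (y2 x)
        + (Θ n).eval x * q (n + 1) (y1 x) := by
  intro n x
  have hd : y2 x - y1 x ≠ 0 := sub_ne_zero.mpr (hy x).symm
  have hP' := hP n x
  have hQ' := hQ n x
  have hS' := hS x
  simp only [Dop, Mop, hq] at hP' hQ' hS' ⊢
  field_simp at hP' hQ' hS' ⊢
  linear_combination S (y1 x) * hP' + P (n+2) (y2 x) * hS' - hQ'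
end

section
/- Suppose first-order difference relations for q_n hold in both forms: A·Dq_n = (l_{n−1} + Δ_y π_{n−1}) E1 q_n + (B E1 S + C/2) E2 q_n + Θ_{n−1} E1 q_{n−1} and A·Dq_n = (l_{n−1} − Δ_y π_{n−1}) E2 q_n + (B E2 S + C/2) E1 q_n + Θ_{n−1} E2 q_{n−1}. Then averaging yields A_n·D q_n = (l_{n−1} + C/2) M q_n + B(2 MS·M q_n − M(S q_n)) + Θ_{n−1} M q_{n−1}, where A_n = A + (Δ_y²/2) π_{n−1}. -/
/-- If the first-order difference relation for `q_n` holds in both its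
`E1`- and `E2`-forms (with polynomial data `l = l_{n-1}`, `π = π_{n-1}`, `Θ = Θ_{n-1}`),
then averaging the two yields
`A_n·D q_n = (l_{n-1} + C/2) M q_n + B (2 MS·M q_n − M(S q_n)) + Θ_{n-1} M q_{n-1}`
with `A_n = A + (Δ_y²/2) π_{n-1}`. -/
theorem stmt17 (y1 y2 : ℝ → ℝ) (hy : ∀ x, y1 x ≠ y2 x)
    (A B Cp : Polynomial ℝ) (l π Θ : Polynomial ℝ)
    (S qn qprev : ℝ → ℝ)
    (h1 : ∀ x, A.eval x * Dop y1 y2 qn x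
      = (l.eval x + (y2 x - y1 x) * π.eval x) * qn (y1 x)
        + (B.eval x * S (y1 x) + Cp.eval x / 2) * qn (y2 x)
        + Θ.eval x * qprev (y1 x))
    (h2 : ∀ x, A.eval x * Dop y1 y2 qn x
      = (l.eval x - (y2 x - y1 x) * π.eval x) * qn (y2 x)
        + (B.eval x * S (y2 x) + Cp.eval x / 2) * qn (y1 x)
        + Θ.eval x * qprev (y2 x)) :
    ∀ x, (A.eval x + (y2 x - y1 x) ^ 2 / 2 * π.eval x) * Dop y1 y2 qn x
      = (l.eval x + Cp.eval x / 2) * Mop y1 y2 qn x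
        + B.eval x * (2 * Mop y1 y2 S x * Mop y1 y2 qn x
            - Mop y1 y2 (fun t => S t * qn t) x)
        + Θ.eval x * Mop y1 y2 qprev x := by
  intro x
  have hΔ : y2 x - y1 x ≠ 0 := sub_ne_zero.mpr fun h => hy x h.symm
  have h := h1 x
  have h' := h2 x
  unfold Dop Mop at *
  have hD : (qn (y2 x) - qn (y1 x)) / (y2 x - y1 x) * (y2 x - y1 x)
      = qn (y2 x) - qn (y1 x) := div_mul_cancel₀ _ hΔ
  linear_combination h / 2 + h' / 2 + (π.eval x * (y2 x - y1 x) / 2) * hD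
end
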